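/- arXiv:2305.04747 — 4 statements merged into one kernel-verified Lean document; each statement's English description precedes it below -/
import Mathlib

section
/- Let N(x) > 0 and D(x) > 0 be functions on a nonempty feasible set S. A point x* minimizes N(x)/D(x) over S with optimal value θ* if and only if min_{x ∈ S} (N(x) − θ*·D(x)) = 0 and x* attains this minimum. -/
open Set

theorem stmt_3 {α : Type*} (S : Set α) (hS : S.Nonempty) (N D : α → ℝ)
    (hN : ∀ x ∈ S, 0 < N x) (hD : ∀ x ∈ S, 0 < D x)
    (xstar : α) (hx : xstar ∈ S) (θ : ℝ) (hθ : θ = N xstar / D xstar) :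
    IsMinOn (fun x => N x / D x) S xstar ↔
      ((∀ x ∈ S, 0 ≤ N x - θ * D x) ∧ N xstar - θ * D xstar = 0) := by
  have hDs := hD xstar hx
  have hθD : θ * D xstar = N xstar := by
    rw [hθ]; field_simp
  constructor
  · intro h
    refine ⟨fun x hxS => ?_, by linarith⟩
    have h1 : θ ≤ N x / D x := by
      have := h hxS
      simp only [hθ] at *
      exact this
    have hDx := hD x hxS
    nlinarith [(div_le_iff₀ hDx).mp (le_refl (N x / D x)), mul_le_mul_of_nonneg_right h1 hDx.le, (div_mul_cancel₀ (N x) hDx.ne')]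
  · rintro ⟨h1, h2⟩
    intro x hxS
    have hDx := hD x hxS
    have := h1 x hxS
    simp only [hθ] at *
    simp only [mem_setOf_eq]
    rw [div_le_div_iff₀ hDs hDx]
    nlinarith
end

section
/- Let N, D : S → ℝ with D > 0 on S. Define F(θ) = inf_{x ∈ S} (N(x) − θ·D(x)). Then F is strictly decreasing in θ (assuming the infimum is finite and D is bounded below by a positive constant on S), and F(θ) = 0 implies θ equals the infimum of N(x)/D(x) over S. -/
open Set

theorem stmt_4 {α : Type*} (S : Set α) (hS : S.Nonempty) (N D : α → ℝ)
    (d₀ : ℝ) (hd₀ : 0 < d₀) (hD : ∀ x ∈ S, d₀ ≤ D x)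
    (F : ℝ → ℝ) (hF : ∀ θ, F θ = sInf ((fun x => N x - θ * D x) '' S))
    (hattain : ∀ θ : ℝ, ∃ x ∈ S, IsMinOn (fun y => N y - θ * D y) S x) :
    StrictAnti F ∧ ∀ θ : ℝ, F θ = 0 → θ = sInf ((fun x => N x / D x) '' S) := by
  -- key: F θ equals the value at the minimizer
  have key : ∀ θ : ℝ, ∀ x ∈ S, IsMinOn (fun y => N y - θ * D y) S x →
      F θ = N x - θ * D x := by
    intro θ x hx hmin
    rw [hF]
    apply IsLeast.csInf_eq
    constructor
    · exact ⟨x, hx, rfl⟩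
    · rintro _ ⟨y, hy, rfl⟩
      exact hmin hy
  constructor
  · intro θ₁ θ₂ hlt
    obtain ⟨x, hx, hmin⟩ := hattain θ₁
    have h1 : F θ₁ = N x - θ₁ * D x := key θ₁ x hx hmin
    obtain ⟨z, hz, hminz⟩ := hattain θ₂
    have h2 : F θ₂ ≤ N x - θ₂ * D x := by
      rw [key θ₂ z hz hminz]
      exact hminz hx
    have hDx : 0 < D x := lt_of_lt_of_le hd₀ (hD x hx)
    nlinarith
  · intro θ hθ
    obtain ⟨x, hx, hmin⟩ := hattain θ
    have h1 : N x - θ * D x = 0 := by rw [← key θ x hx hmin]; exact hθ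
    have hDx : 0 < D x := lt_of_lt_of_le hd₀ (hD x hx)
    have hx0 : N x / D x = θ := by field_simp; linarith
    symm
    apply IsLeast.csInf_eq
    constructor
    · exact ⟨x, hx, hx0⟩
    · rintro _ ⟨y, hy, rfl⟩
      have hDy : 0 < D y := lt_of_lt_of_le hd₀ (hD y hy)
      have := hmin hy
      simp only [mem_setOf_eq, h1] at this
      rw [le_div_iff₀ hDy]
      linarith [this]
end

section
/- The function η(t1, q) = Σ_n κ_n·X³·c_n³·(q_n³/t1² + 3q_n) + ϑ·(t1 + t2 + t3 + t4), defined for t1 > 0 and q_n ∈ [0, t1], is jointly convex in (t1, t2, t3, t4, q₁, …, q_N). -/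
open Set

/-!
Each summand `q ^ 3 / t ^ 2` is the perspective `t * (q / t) ^ 3` of the convex function `u ↦ u ^ 3`
on `u ≥ 0`, and perspectives of convex functions are jointly convex: for `t = a t₁ + b t₂`, the
point `(a q₁ + b q₂) / t` is the convex combination of `q₁ / t₁` and `q₂ / t₂` with weights
`a t₁ / t` and `b t₂ / t`. The remaining terms are linear, and the weights `κ n X³ (c n)³` are
nonnegative.
-/

theorem ConvexOn.fun_sum {𝕜 E β ι : Type*} [Semiring 𝕜] [PartialOrder 𝕜] [AddCommMonoid E]
    [AddCommMonoid β] [PartialOrder β] [IsOrderedAddMonoid β] [SMul 𝕜 E] [Module 𝕜 β]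
    {s : Set E} {t : Finset ι} {f : ι → E → β} (hs : Convex 𝕜 s)
    (hf : ∀ i ∈ t, ConvexOn 𝕜 s (f i)) : ConvexOn 𝕜 s fun x => ∑ i ∈ t, f i x := by
  have h : ConvexOn 𝕜 s (∑ i ∈ t, f i) :=
    Finset.sum_induction f (ConvexOn 𝕜 s) (fun _ _ => ConvexOn.add) (convexOn_const 0 hs) hf
  simpa only [Finset.sum_fn] using h

section Perspective

variable {𝕜 E : Type*} [Field 𝕜] [LinearOrder 𝕜] [IsStrictOrderedRing 𝕜] [AddCommGroup E]
  [Module 𝕜 E] {s : Set E} {f : E → 𝕜}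

theorem ConvexOn.perspective (hf : ConvexOn 𝕜 s f) :
    ConvexOn 𝕜 {p : 𝕜 × E | 0 < p.1 ∧ p.1⁻¹ • p.2 ∈ s} fun p => p.1 * f (p.1⁻¹ • p.2) := by
  have key : ∀ ⦃x y : 𝕜 × E⦄, 0 < x.1 → 0 < y.1 → ∀ ⦃a b : 𝕜⦄, 0 ≤ a → 0 ≤ b → a + b = 1 →
      0 < (a • x + b • y).1 ∧
      (a • x + b • y).1⁻¹ • (a • x + b • y).2 =
        (a * x.1 / (a • x + b • y).1) • (x.1⁻¹ • x.2)
          + (b * y.1 / (a • x + b • y).1) • (y.1⁻¹ • y.2) ∧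
      a * x.1 / (a • x + b • y).1 + b * y.1 / (a • x + b • y).1 = 1 := by
    intro x y hx hy a b ha hb hab
    have ht : 0 < (a • x + b • y).1 := convex_Ioi 0 hx hy ha hb hab
    refine ⟨ht, ?_, ?_⟩
    · simp only [Prod.fst_add, Prod.smul_fst, Prod.snd_add, Prod.smul_snd, smul_eq_mul, smul_smul,
        smul_add] at ht ⊢
      congr 1 <;> congr 1 <;> field_simp
    · rw [← add_div, div_eq_one_iff_eq ht.ne']
      simp
  refine ⟨?_, ?_⟩
  · rintro x ⟨hx, hxs⟩ y ⟨hy, hys⟩ a b ha hb hab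
    obtain ⟨ht, heq, hsum⟩ := key hx hy ha hb hab
    refine ⟨ht, ?_⟩
    rw [heq]
    exact hf.1 hxs hys (by positivity) (by positivity) hsum
  · rintro x ⟨hx, hxs⟩ y ⟨hy, hys⟩ a b ha hb hab
    obtain ⟨ht, heq, hsum⟩ := key hx hy ha hb hab
    dsimp only
    rw [heq]
    calc _ ≤ (a • x + b • y).1 * ((a * x.1 / (a • x + b • y).1) • f (x.1⁻¹ • x.2)
            + (b * y.1 / (a • x + b • y).1) • f (y.1⁻¹ • y.2)) :=
          mul_le_mul_of_nonneg_left (hf.2 hxs hys (by positivity) (by positivity) hsum) ht.le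
      _ = _ := by simp only [smul_eq_mul]; field_simp

theorem convexOn_pow_succ_div_pow (n : ℕ) :
    ConvexOn 𝕜 {p : 𝕜 × 𝕜 | 0 < p.1 ∧ 0 ≤ p.2} fun p => p.2 ^ (n + 1) / p.1 ^ n := by
  have hset : {p : 𝕜 × 𝕜 | 0 < p.1 ∧ p.1⁻¹ • p.2 ∈ Ici 0} = {p | 0 < p.1 ∧ 0 ≤ p.2} := by
    ext ⟨t, q⟩
    simp only [mem_ofPred_eq, mem_Ici, smul_eq_mul, and_congr_right_iff]
    intro ht
    exact mul_nonneg_iff_of_pos_left (inv_pos.2 ht)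
  refine hset ▸ (convexOn_pow (n + 1)).perspective.congr fun p hp => ?_
  have : p.1 ≠ 0 := hp.1.ne'
  simp only [smul_eq_mul]
  rw [mul_pow, inv_pow, pow_succ p.1]
  field_simp

end Perspective

section CaseII

def caseIIDomain (N : ℕ) : Set (ℝ × ℝ × ℝ × ℝ × (Fin N → ℝ)) :=
  {p | 0 < p.1 ∧ ∀ n, p.2.2.2.2 n ∈ Icc 0 p.1}

variable {N : ℕ}

theorem convex_caseIIDomain : Convex ℝ (caseIIDomain N) := by
  rintro x ⟨hx, hxq⟩ y ⟨hy, hyq⟩ a b ha hb hab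
  refine ⟨convex_Ioi (0 : ℝ) hx hy ha hb hab,
    fun n => ⟨convex_Ici (0 : ℝ) (hxq n).1 (hyq n).1 ha hb hab, ?_⟩⟩
  exact add_le_add (smul_le_smul_of_nonneg_left (hxq n).2 ha)
    (smul_le_smul_of_nonneg_left (hyq n).2 hb)

theorem convexOn_caseIIDomain_cube_div_sq_add (n : Fin N) :
    ConvexOn ℝ (caseIIDomain N) fun p => p.2.2.2.2 n ^ 3 / p.1 ^ 2 + 3 * p.2.2.2.2 n := by
  have hφ : ConvexOn ℝ {p : ℝ × ℝ | 0 < p.1 ∧ 0 ≤ p.2} fun p => p.2 ^ 3 / p.1 ^ 2 + 3 * p.2 := by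
    have h := convexOn_pow_succ_div_pow (𝕜 := ℝ) 2
    exact h.add (((3 : ℝ) • LinearMap.snd ℝ ℝ ℝ).convexOn h.1)
  let π : ℝ × ℝ × ℝ × ℝ × (Fin N → ℝ) →ₗ[ℝ] ℝ × ℝ :=
    (LinearMap.fst _ _ _).prod (LinearMap.proj n ∘ₗ LinearMap.snd _ _ _ ∘ₗ LinearMap.snd _ _ _
      ∘ₗ LinearMap.snd _ _ _ ∘ₗ LinearMap.snd _ _ _)
  exact (hφ.comp_linearMap π).subset (fun p hp => ⟨hp.1, (hp.2 n).1⟩) convex_caseIIDomain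

theorem convexOn_caseIIDomain_linear (ϑ : ℝ) :
    ConvexOn ℝ (caseIIDomain N) fun p => ϑ * (p.1 + p.2.1 + p.2.2.1 + p.2.2.2.1) :=
  (IsLinearMap.mk' (fun p : ℝ × ℝ × ℝ × ℝ × (Fin N → ℝ) => ϑ * (p.1 + p.2.1 + p.2.2.1 + p.2.2.2.1))
    ⟨fun p q => by simp only [Prod.fst_add, Prod.snd_add]; ring,
    fun a p => by simp only [Prod.smul_fst, Prod.smul_snd, smul_eq_mul]; ring⟩).convexOn
    convex_caseIIDomain

end CaseII

theorem stmt_16_general {N : ℕ} (X ϑ : ℝ) (hX : 0 < X)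
    (κ c : Fin N → ℝ) (hκ : ∀ n, 0 < κ n) (hc : ∀ n, 0 < c n) :
    ConvexOn ℝ
      {p : ℝ × ℝ × ℝ × ℝ × (Fin N → ℝ) |
        0 < p.1 ∧ ∀ n, p.2.2.2.2 n ∈ Set.Icc 0 p.1}
      (fun p : ℝ × ℝ × ℝ × ℝ × (Fin N → ℝ) =>
        (∑ n, κ n * X ^ 3 * (c n) ^ 3 * ((p.2.2.2.2 n) ^ 3 / p.1 ^ 2 + 3 * p.2.2.2.2 n))
          + ϑ * (p.1 + p.2.1 + p.2.2.1 + p.2.2.2.1)) := by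
  have hweight (n : Fin N) : 0 ≤ κ n * X ^ 3 * c n ^ 3 := by
    have := hκ n; have := hc n; positivity
  exact (ConvexOn.fun_sum convex_caseIIDomain fun n _ =>
    (convexOn_caseIIDomain_cube_div_sq_add n).smul (hweight n)).add
    (convexOn_caseIIDomain_linear ϑ)

theorem stmt_16 {N : ℕ} (X ϑ : ℝ) (hX : 0 < X) (hϑ : 0 ≤ ϑ)
    (κ c : Fin N → ℝ) (hκ : ∀ n, 0 < κ n) (hc : ∀ n, 0 < c n) :
    ConvexOn ℝ
      {p : ℝ × ℝ × ℝ × ℝ × (Fin N → ℝ) |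
        0 < p.1 ∧ ∀ n, p.2.2.2.2 n ∈ Set.Icc 0 p.1}
      (fun p : ℝ × ℝ × ℝ × ℝ × (Fin N → ℝ) =>
        (∑ n, κ n * X ^ 3 * (c n) ^ 3 * ((p.2.2.2.2 n) ^ 3 / p.1 ^ 2 + 3 * p.2.2.2.2 n))
          + ϑ * (p.1 + p.2.1 + p.2.2.1 + p.2.2.2.1)) :=
  stmt_16_general X ϑ hX κ c hκ hc
end

section
/- For t1 > 0 and 0 ≤ q ≤ t1, the identity t1·(1 − q/t1)³ = t1 + 3q²/t1 − q³/t1² − 3q holds; moreover both (t1, q) ↦ t1 + 3q²/t1 and (t1, q) ↦ q³/t1² + 3q are jointly convex on {t1 > 0, 0 ≤ q ≤ t1}, exhibiting t1·(1−q/t1)³ as a difference of convex functions. -/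
open Set

private lemma convS : Convex ℝ {p : ℝ × ℝ | 0 < p.1 ∧ 0 ≤ p.2 ∧ p.2 ≤ p.1} := by
  intro p hp q hq a b ha hb hab
  simp only [mem_setOf_eq, Prod.fst_add, Prod.snd_add, Prod.smul_fst, Prod.smul_snd,
    smul_eq_mul] at *
  refine ⟨?_, ?_, ?_⟩
  · rcases eq_or_lt_of_le ha with h | h
    · have hb1 : b = 1 := by linarith
      simpa [← h, hb1] using hq.1
    · have := mul_nonneg hb hq.1.le
      nlinarith [hp.1]
  · exact add_nonneg (mul_nonneg ha hp.2.1) (mul_nonneg hb hq.2.1)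
  · exact add_le_add (mul_le_mul_of_nonneg_left hp.2.2 ha)
      (mul_le_mul_of_nonneg_left hq.2.2 hb)

private lemma sq_key (a b t1 t2 x1 x2 : ℝ) (ha : 0 ≤ a) (hb : 0 ≤ b)
    (ht1 : 0 < t1) (ht2 : 0 < t2) (ht : 0 < a * t1 + b * t2) :
    (a * x1 + b * x2) ^ 2 / (a * t1 + b * t2) ≤ a * (x1 ^ 2 / t1) + b * (x2 ^ 2 / t2) := by
  have key : a * (x1 ^ 2 / t1) + b * (x2 ^ 2 / t2) - (a * x1 + b * x2) ^ 2 / (a * t1 + b * t2)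
      = (a * b * (x1 * t2 - x2 * t1) ^ 2) / (t1 * t2 * (a * t1 + b * t2)) := by
    field_simp
    ring
  nlinarith [div_nonneg (mul_nonneg (mul_nonneg ha hb) (sq_nonneg (x1 * t2 - x2 * t1)))
    (le_of_lt (by positivity : (0:ℝ) < t1 * t2 * (a * t1 + b * t2)))]

private lemma cube_key (a b t1 t2 x1 x2 : ℝ) (ha : 0 ≤ a) (hb : 0 ≤ b)
    (ht1 : 0 < t1) (ht2 : 0 < t2) (hx1 : 0 ≤ x1) (hx2 : 0 ≤ x2)
    (ht : 0 < a * t1 + b * t2) :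
    (a * x1 + b * x2) ^ 3 / (a * t1 + b * t2) ^ 2
      ≤ a * (x1 ^ 3 / t1 ^ 2) + b * (x2 ^ 3 / t2 ^ 2) := by
  have key : a * (x1 ^ 3 / t1 ^ 2) + b * (x2 ^ 3 / t2 ^ 2)
      - (a * x1 + b * x2) ^ 3 / (a * t1 + b * t2) ^ 2
      = (a * b * (x1 * t2 - x2 * t1) ^ 2 *
          (b * x1 * t2 ^ 2 + 2 * b * x2 * t1 * t2 + 2 * a * x1 * t1 * t2 + a * x2 * t1 ^ 2))
        / (t1 ^ 2 * t2 ^ 2 * (a * t1 + b * t2) ^ 2) := by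
    field_simp
    ring
  have hnum : 0 ≤ a * b * (x1 * t2 - x2 * t1) ^ 2 *
      (b * x1 * t2 ^ 2 + 2 * b * x2 * t1 * t2 + 2 * a * x1 * t1 * t2 + a * x2 * t1 ^ 2) := by
    have h1 : 0 ≤ b * x1 * t2 ^ 2 + 2 * b * x2 * t1 * t2 + 2 * a * x1 * t1 * t2
        + a * x2 * t1 ^ 2 := by positivity
    positivity
  nlinarith [div_nonneg hnum
    (le_of_lt (by positivity : (0:ℝ) < t1 ^ 2 * t2 ^ 2 * (a * t1 + b * t2) ^ 2))]

theorem stmt_17 :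
    (∀ t1 q : ℝ, 0 < t1 → 0 ≤ q → q ≤ t1 →
      t1 * (1 - q / t1) ^ 3 = t1 + 3 * q ^ 2 / t1 - q ^ 3 / t1 ^ 2 - 3 * q) ∧
    ConvexOn ℝ {p : ℝ × ℝ | 0 < p.1 ∧ 0 ≤ p.2 ∧ p.2 ≤ p.1}
      (fun p : ℝ × ℝ => p.1 + 3 * p.2 ^ 2 / p.1) ∧
    ConvexOn ℝ {p : ℝ × ℝ | 0 < p.1 ∧ 0 ≤ p.2 ∧ p.2 ≤ p.1}
      (fun p : ℝ × ℝ => p.2 ^ 3 / p.1 ^ 2 + 3 * p.2) := by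
  refine ⟨?_, ⟨convS, ?_⟩, ⟨convS, ?_⟩⟩
  · intro t1 q ht1 _ _
    field_simp
    ring
  · intro p hp q hq a b ha hb hab
    simp only [mem_setOf_eq] at hp hq
    simp only [Prod.fst_add, Prod.snd_add, Prod.smul_fst, Prod.smul_snd, smul_eq_mul]
    have ht : 0 < a * p.1 + b * q.1 :=
      (convS hp hq ha hb hab).1
    have h := sq_key a b p.1 q.1 p.2 q.2 ha hb hp.1 hq.1 ht
    have e1 : 3 * (a * p.2 + b * q.2) ^ 2 / (a * p.1 + b * q.1)
        = 3 * ((a * p.2 + b * q.2) ^ 2 / (a * p.1 + b * q.1)) := by ring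
    have e2 : a * (p.1 + 3 * p.2 ^ 2 / p.1) + b * (q.1 + 3 * q.2 ^ 2 / q.1)
        = (a * p.1 + b * q.1) + 3 * (a * (p.2 ^ 2 / p.1) + b * (q.2 ^ 2 / q.1)) := by ring
    rw [e2]
    have : 3 * (a * p.2 + b * q.2) ^ 2 / (a * p.1 + b * q.1)
        ≤ 3 * (a * (p.2 ^ 2 / p.1) + b * (q.2 ^ 2 / q.1)) := by
      rw [e1]; linarith
    linarith
  · intro p hp q hq a b ha hb hab
    simp only [mem_setOf_eq] at hp hq
    simp only [Prod.fst_add, Prod.snd_add, Prod.smul_fst, Prod.smul_snd, smul_eq_mul]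
    have ht : 0 < a * p.1 + b * q.1 :=
      (convS hp hq ha hb hab).1
    have h := cube_key a b p.1 q.1 p.2 q.2 ha hb hp.1 hq.1 hp.2.1 hq.2.1 ht
    have e2 : a * (p.2 ^ 3 / p.1 ^ 2 + 3 * p.2) + b * (q.2 ^ 3 / q.1 ^ 2 + 3 * q.2)
        = (a * (p.2 ^ 3 / p.1 ^ 2) + b * (q.2 ^ 3 / q.1 ^ 2))
          + 3 * (a * p.2 + b * q.2) := by ring
    rw [e2]
    linarith
end
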